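/- Let s and t be self-adjoint operators on a complex Hilbert space H such that the pair (s,t) weakly anticommutes: for all λ ∈ ℝ∖{0}, (1) there is a core X for t with (s ± λi)^{-1}X ⊆ Dom t; (2) t(s ± λi)^{-1}X ⊆ Dom s; (3) the operator x ↦ (st + ts)(s ± λi)^{-1}x is bounded on X. Then for every λ ∈ ℝ∖{0}: (a) (s ± λi)^{-1} maps Dom t into Dom t; (b) s maps (s − λi)^{-1}(Dom t) into Dom t and t maps (s − λi)^{-1}(Dom t) into Dom s, so the anticommutator st + ts is defined on (s − λi)^{-1}(Dom t); (c) the operator x ↦ (st + ts)(s ± λi)^{-1}x is bounded on all of Dom t, and for every x ∈ Dom t one has t(s ± λi)^{-1}x + (s ∓ λi)^{-1}tx = (s ∓ λi)^{-1}(st + ts)(s ± λi)^{-1}x. -/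

import Mathlib

/-!
Fix `λ ≠ 0` and write `B z = (st + ts)(s + λi)⁻¹ z`. For `z` in the core `X`, applying
`(s − λi)⁻¹` to `(s − λi) t (s + λi)⁻¹ z = B z − t z` gives
`t (s + λi)⁻¹ z = (s − λi)⁻¹ (B z − t z)`. Given `x ∈ Dom t`, approximate it in the graph norm
of `t` by `uₙ ∈ X`. Since `B` is linear and bounded on `X`, `B uₙ` is Cauchy, hence converges,
so `t (s + λi)⁻¹ uₙ` converges too. Closedness of the self-adjoint `t` puts `(s + λi)⁻¹ x` in
`Dom t`, with `t (s + λi)⁻¹ x` in the range of `(s − λi)⁻¹`, i.e. in `Dom s`; the identity and the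
bound then pass to the limit.
-/

open Filter Topology
open scoped Classical

/-- Application of a partially defined operator, with junk value `0` off the domain. -/
noncomputable def pApply {H : Type*} [NormedAddCommGroup H] [InnerProductSpace ℂ H]
    (D : H →ₗ.[ℂ] H) (x : H) : H :=
  if hm : x ∈ D.domain then D ⟨x, hm⟩ else 0

/-- `R` is the family of resolvents of the (self-adjoint) operator `s` :
for each `l ≠ 0`, `R l` is the bounded, everywhere defined, inverse of `s + l·i`,
of norm at most `1/|l|`. -/
def IsResolventOf {H : Type*} [NormedAddCommGroup H] [InnerProductSpace ℂ H]
    (s : H →ₗ.[ℂ] H) (R : ℝ → H →L[ℂ] H) : Prop :=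
  ∀ l : ℝ, l ≠ 0 →
    (∀ h : H, R l h ∈ s.domain) ∧
    (∀ h : H, pApply s (R l h) + ((l : ℂ) * Complex.I) • R l h = h) ∧
    (∀ x ∈ s.domain, R l (pApply s x + ((l : ℂ) * Complex.I) • x) = x) ∧
    ‖R l‖ ≤ 1 / |l|

section Operators

variable {H : Type*} [NormedAddCommGroup H] [InnerProductSpace ℂ H]

section PartialApplication

variable (D : H →ₗ.[ℂ] H)

lemma pApply_of_mem {x : H} (hx : x ∈ D.domain) : pApply D x = D ⟨x, hx⟩ :=
  dif_pos hx

lemma pApply_sub {x y : H} (hx : x ∈ D.domain) (hy : y ∈ D.domain) :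
    pApply D (x - y) = pApply D x - pApply D y := by
  rw [pApply_of_mem D (sub_mem hx hy), pApply_of_mem D hx, pApply_of_mem D hy]
  exact D.map_sub ⟨x, hx⟩ ⟨y, hy⟩

lemma pApply_smul (c : ℂ) {x : H} (hx : x ∈ D.domain) : pApply D (c • x) = c • pApply D x := by
  rw [pApply_of_mem D (D.domain.smul_mem c hx), pApply_of_mem D hx]
  exact D.map_smul c ⟨x, hx⟩

end PartialApplication

lemma LinearPMap.IsClosed.mem_domain_of_tendsto {t : H →ₗ.[ℂ] H} (ht : t.IsClosed)
    {u : ℕ → H} {x y : H} (hu : ∀ n, u n ∈ t.domain) (hux : Tendsto u atTop (𝓝 x))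
    (huy : Tendsto (fun n => pApply t (u n)) atTop (𝓝 y)) :
    x ∈ t.domain ∧ pApply t x = y := by
  have hgraph : (x, y) ∈ t.graph :=
    IsClosed.mem_of_tendsto ht (hux.prodMk_nhds huy) <| Eventually.of_forall fun n => by
      rw [pApply_of_mem t (hu n)]
      exact t.mem_graph ⟨u n, hu n⟩
  obtain ⟨⟨x', hx'⟩, rfl, rfl⟩ := (t.mem_graph_iff).mp hgraph
  exact ⟨hx', pApply_of_mem t hx'⟩

lemma exists_seq_tendsto_of_core {t : H →ₗ.[ℂ] H} {X : Set H}
    (hX : ∀ y ∈ t.domain, ∀ ε > (0 : ℝ), ∃ x ∈ X, ‖x - y‖ + ‖pApply t x - pApply t y‖ < ε)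
    {x : H} (hx : x ∈ t.domain) :
    ∃ u : ℕ → H, (∀ n, u n ∈ X) ∧ Tendsto u atTop (𝓝 x) ∧
      Tendsto (fun n => pApply t (u n)) atTop (𝓝 (pApply t x)) := by
  choose u huX hu using fun n : ℕ => hX x hx (1 / ((n : ℝ) + 1)) Nat.one_div_pos_of_nat
  have h0 : Tendsto (fun n : ℕ => 1 / ((n : ℝ) + 1)) atTop (𝓝 0) :=
    tendsto_one_div_add_atTop_nhds_zero_nat
  refine ⟨u, huX, ?_, ?_⟩ <;> rw [tendsto_iff_norm_sub_tendsto_zero] <;>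
    refine squeeze_zero (fun n => norm_nonneg _) (fun n => ?_) h0
  · exact (le_add_of_nonneg_right (norm_nonneg _)).trans (hu n).le
  · exact (le_add_of_nonneg_left (norm_nonneg _)).trans (hu n).le

section Anticommutator

variable (s t : H →ₗ.[ℂ] H)

def anticommutatorDomain : Set H :=
  {y | y ∈ s.domain ∧ y ∈ t.domain ∧ pApply s y ∈ t.domain ∧ pApply t y ∈ s.domain}

noncomputable def anticommutator (y : H) : H :=
  pApply s (pApply t y) + pApply t (pApply s y)

variable {s t}

lemma anticommutator_sub {y w : H} (hy : y ∈ anticommutatorDomain s t)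
    (hw : w ∈ anticommutatorDomain s t) :
    anticommutator s t (y - w) = anticommutator s t y - anticommutator s t w := by
  obtain ⟨hys, hyt, hsy, hty⟩ := hy
  obtain ⟨hws, hwt, hsw, htw⟩ := hw
  simp only [anticommutator, pApply_sub _ hys hws, pApply_sub _ hyt hwt, pApply_sub _ hsy hsw,
    pApply_sub _ hty htw]
  abel

end Anticommutator

namespace IsResolventOf

variable {s t : H →ₗ.[ℂ] H} {R : ℝ → H →L[ℂ] H} {l : ℝ}

lemma pApply_apply (hR : IsResolventOf s R) (hl : l ≠ 0) (h : H) :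
    pApply s (R l h) = h - ((l : ℂ) * Complex.I) • R l h :=
  eq_sub_of_add_eq ((hR l hl).2.1 h)

lemma injective (hR : IsResolventOf s R) (hl : l ≠ 0) : Function.Injective (R l) := by
  intro a b hab
  rw [← (hR l hl).2.1 a, ← (hR l hl).2.1 b, hab]

lemma apply_neg_pApply_sub (hR : IsResolventOf s R) (hl : l ≠ 0) {y : H} (hy : y ∈ s.domain) :
    R (-l) (pApply s y - ((l : ℂ) * Complex.I) • y) = y := by
  have h := (hR (-l) (neg_ne_zero.mpr hl)).2.2.1 y hy
  rwa [Complex.ofReal_neg, neg_mul, neg_smul, ← sub_eq_add_neg] at h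

lemma pApply_apply_mem (hR : IsResolventOf s R) (hl : l ≠ 0) {z : H} (hz : z ∈ t.domain)
    (hRz : R l z ∈ t.domain) : pApply s (R l z) ∈ t.domain := by
  rw [hR.pApply_apply hl]
  exact sub_mem hz (t.domain.smul_mem _ hRz)

lemma pApply_pApply_apply (hR : IsResolventOf s R) (hl : l ≠ 0) {z : H} (hz : z ∈ t.domain)
    (hRz : R l z ∈ t.domain) :
    pApply t (pApply s (R l z)) = pApply t z - ((l : ℂ) * Complex.I) • pApply t (R l z) := by
  rw [hR.pApply_apply hl, pApply_sub t hz (t.domain.smul_mem _ hRz), pApply_smul t _ hRz]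

lemma apply_mem_anticommutatorDomain (hR : IsResolventOf s R) (hl : l ≠ 0) {z : H}
    (hz : z ∈ t.domain) (hRz : R l z ∈ t.domain) (htRz : pApply t (R l z) ∈ s.domain) :
    R l z ∈ anticommutatorDomain s t :=
  ⟨(hR l hl).1 z, hRz, hR.pApply_apply_mem hl hz hRz, htRz⟩

lemma pApply_apply_add_apply_neg (hR : IsResolventOf s R) (hl : l ≠ 0) {z : H}
    (hz : z ∈ t.domain) (hRz : R l z ∈ t.domain) (htRz : pApply t (R l z) ∈ s.domain) :
    pApply t (R l z) + R (-l) (pApply t z) = R (-l) (anticommutator s t (R l z)) := by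
  have h : anticommutator s t (R l z) =
      (pApply s (pApply t (R l z)) - ((l : ℂ) * Complex.I) • pApply t (R l z)) + pApply t z := by
    rw [anticommutator, hR.pApply_pApply_apply hl hz hRz]
    abel
  rw [h, map_add, hR.apply_neg_pApply_sub hl htRz]

section Core

variable {X : Submodule ℂ H} {C : ℝ}

lemma lipschitzOnWith_anticommutator (hR : IsResolventOf s R) (hl : l ≠ 0)
    (hXt : X ≤ t.domain) (h1 : ∀ x ∈ X, R l x ∈ t.domain)
    (h2 : ∀ x ∈ X, pApply t (R l x) ∈ s.domain)
    (hC : ∀ x ∈ X, ‖anticommutator s t (R l x)‖ ≤ C * ‖x‖) :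
    LipschitzOnWith C.toNNReal (fun z => anticommutator s t (R l z)) X := by
  have hdom : ∀ x ∈ X, R l x ∈ anticommutatorDomain s t := fun x hx =>
    hR.apply_mem_anticommutatorDomain hl (hXt hx) (h1 x hx) (h2 x hx)
  refine LipschitzOnWith.of_dist_le_mul fun z hz w hw => ?_
  calc dist (anticommutator s t (R l z)) (anticommutator s t (R l w))
      = ‖anticommutator s t (R l (z - w))‖ := by
        rw [dist_eq_norm, map_sub, anticommutator_sub (hdom z hz) (hdom w hw)]
    _ ≤ C * ‖z - w‖ := hC _ (sub_mem hz hw)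
    _ ≤ C.toNNReal * dist z w := by
        rw [dist_eq_norm]
        gcongr
        exact Real.le_coe_toNNReal C

variable [CompleteSpace H]

lemma mem_domain_of_tendsto (hR : IsResolventOf s R) (hl : l ≠ 0) (ht : t.IsClosed)
    (hXt : X ≤ t.domain) (h1 : ∀ x ∈ X, R l x ∈ t.domain)
    (h2 : ∀ x ∈ X, pApply t (R l x) ∈ s.domain)
    (hC : ∀ x ∈ X, ‖anticommutator s t (R l x)‖ ≤ C * ‖x‖)
    {u : ℕ → H} {x : H} (hx : x ∈ t.domain) (huX : ∀ n, u n ∈ X) (hux : Tendsto u atTop (𝓝 x))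
    (htux : Tendsto (fun n => pApply t (u n)) atTop (𝓝 (pApply t x))) :
    R l x ∈ t.domain ∧ pApply t (R l x) ∈ s.domain ∧
      Tendsto (fun n => anticommutator s t (R l (u n))) atTop
        (𝓝 (anticommutator s t (R l x))) := by
  have hl' : -l ≠ 0 := neg_ne_zero.mpr hl
  obtain ⟨y, hy⟩ := cauchySeq_tendsto_of_complete <|
    (hR.lipschitzOnWith_anticommutator hl hXt h1 h2 hC).cauchySeq_comp hux.cauchySeq
      (Set.range_subset_iff.mpr huX)
  have htRu : Tendsto (fun n => pApply t (R l (u n))) atTop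
      (𝓝 (R (-l) (y - pApply t x))) := by
    have hu : ∀ n, pApply t (R l (u n)) =
        R (-l) (anticommutator s t (R l (u n)) - pApply t (u n)) := fun n => by
      rw [map_sub, ← hR.pApply_apply_add_apply_neg hl (hXt (huX n)) (h1 _ (huX n))
        (h2 _ (huX n)), add_sub_cancel_right]
    simp only [hu]
    exact ((R (-l)).continuous.tendsto _).comp (hy.sub htux)
  obtain ⟨hRx, htRx⟩ := ht.mem_domain_of_tendsto (fun n => h1 _ (huX n))
    (((R l).continuous.tendsto x).comp hux) htRu
  have htRx_mem : pApply t (R l x) ∈ s.domain := htRx ▸ (hR (-l) hl').1 _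
  have hy_eq : anticommutator s t (R l x) = y := hR.injective hl' <| by
    rw [← hR.pApply_apply_add_apply_neg hl hx hRx htRx_mem, htRx, map_sub, sub_add_cancel]
  exact ⟨hRx, htRx_mem, hy_eq ▸ hy⟩

lemma mem_domain_of_core (hR : IsResolventOf s R) (hl : l ≠ 0) (ht : t.IsClosed)
    (hXt : X ≤ t.domain)
    (hXcore : ∀ y ∈ t.domain, ∀ ε > (0 : ℝ), ∃ x ∈ X,
      ‖x - y‖ + ‖pApply t x - pApply t y‖ < ε)
    (h1 : ∀ x ∈ X, R l x ∈ t.domain) (h2 : ∀ x ∈ X, pApply t (R l x) ∈ s.domain)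
    (hC : ∀ x ∈ X, ‖anticommutator s t (R l x)‖ ≤ C * ‖x‖) {x : H} (hx : x ∈ t.domain) :
    R l x ∈ t.domain ∧ pApply t (R l x) ∈ s.domain ∧
      ‖anticommutator s t (R l x)‖ ≤ C * ‖x‖ := by
  obtain ⟨u, huX, hux, htux⟩ := exists_seq_tendsto_of_core (X := X) hXcore hx
  obtain ⟨hRx, htRx, hB⟩ := hR.mem_domain_of_tendsto hl ht hXt h1 h2 hC hx huX hux htux
  exact ⟨hRx, htRx,
    le_of_tendsto_of_tendsto' hB.norm (hux.norm.const_mul C) fun n => hC _ (huX n)⟩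

end Core

end IsResolventOf

end Operators

theorem statement18_general
    {H : Type*} [NormedAddCommGroup H] [InnerProductSpace ℂ H] [CompleteSpace H]
    (s t : H →ₗ.[ℂ] H)
    -- s, t self-adjoint
    (ht : t.adjoint = t)
    -- the resolvents (s + λi)⁻¹ and (t + λi)⁻¹
    (Rs : ℝ → H →L[ℂ] H)
    (hRs : IsResolventOf s Rs)
    -- X is a core for t
    (X : Submodule ℂ H) (hXt : X ≤ t.domain)
    (hXcore : ∀ y ∈ t.domain, ∀ ε > (0 : ℝ), ∃ x ∈ X,
      ‖x - y‖ + ‖pApply t x - pApply t y‖ < ε)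
    -- (1) (s ± λi)⁻¹ X ⊆ Dom t
    (h1 : ∀ l : ℝ, l ≠ 0 → ∀ x ∈ X, Rs l x ∈ t.domain)
    -- (2) t (s ± λi)⁻¹ X ⊆ Dom s
    (h2 : ∀ l : ℝ, l ≠ 0 → ∀ x ∈ X, pApply t (Rs l x) ∈ s.domain)
    -- (3) (st + ts)(s ± λi)⁻¹ is bounded on X
    (h3 : ∀ l : ℝ, l ≠ 0 → ∃ C : ℝ, ∀ x ∈ X,
      ‖pApply s (pApply t (Rs l x)) + pApply t (pApply s (Rs l x))‖ ≤ C * ‖x‖) :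
    ∀ l : ℝ, l ≠ 0 →
      -- (a) (s + λi)⁻¹ maps Dom t into Dom t
      (∀ x ∈ t.domain, Rs l x ∈ t.domain) ∧
      -- (b) s maps (s + λi)⁻¹(Dom t) into Dom t, t maps (s + λi)⁻¹(Dom t) into Dom s
      (∀ x ∈ t.domain, pApply s (Rs l x) ∈ t.domain ∧ pApply t (Rs l x) ∈ s.domain) ∧
      -- (c) boundedness of (st + ts)(s + λi)⁻¹ on all of Dom t …
      (∃ C : ℝ, ∀ x ∈ t.domain,
        ‖pApply s (pApply t (Rs l x)) + pApply t (pApply s (Rs l x))‖ ≤ C * ‖x‖) ∧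
      -- … and the commutator identity on Dom t
      (∀ x ∈ t.domain,
        pApply t (Rs l x) + Rs (-l) (pApply t x) =
          Rs (-l) (pApply s (pApply t (Rs l x)) + pApply t (pApply s (Rs l x)))) := by
  intro l hl
  obtain ⟨C, hC⟩ := h3 l hl
  have hdom := fun x (hx : x ∈ t.domain) => hRs.mem_domain_of_core hl
    (IsSelfAdjoint.isClosed ht) hXt hXcore (h1 l hl) (h2 l hl) hC hx
  exact ⟨fun x hx => (hdom x hx).1,
    fun x hx => ⟨hRs.pApply_apply_mem hl hx (hdom x hx).1, (hdom x hx).2.1⟩,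
    ⟨C, fun x hx => (hdom x hx).2.2⟩,
    fun x hx => hRs.pApply_apply_add_apply_neg hl hx (hdom x hx).1 (hdom x hx).2.1⟩

/-- Let `s` and `t` be self-adjoint operators on a complex Hilbert
space `H` such that the pair `(s,t)` weakly anticommutes (with core `X` for `t`).  Then
for every `λ ≠ 0`:
(a) `(s ± λi)⁻¹` maps `Dom t` into `Dom t`;
(b) `s` maps `(s − λi)⁻¹(Dom t)` into `Dom t` and `t` maps `(s − λi)⁻¹(Dom t)` into
    `Dom s`, so `st + ts` is defined on `(s − λi)⁻¹(Dom t)`;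
(c) `(st + ts)(s ± λi)⁻¹` is bounded on all of `Dom t`, and for every `x ∈ Dom t`,
    `t(s ± λi)⁻¹x + (s ∓ λi)⁻¹tx = (s ∓ λi)⁻¹(st + ts)(s ± λi)⁻¹x`. -/
theorem statement18
    {H : Type*} [NormedAddCommGroup H] [InnerProductSpace ℂ H] [CompleteSpace H]
    (s t : H →ₗ.[ℂ] H)
    -- s, t self-adjoint
    (hs : s.adjoint = s) (ht : t.adjoint = t)
    -- the resolvents (s + λi)⁻¹ and (t + λi)⁻¹
    (Rs Rt : ℝ → H →L[ℂ] H)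
    (hRs : IsResolventOf s Rs) (hRt : IsResolventOf t Rt)
    -- X is a core for t
    (X : Submodule ℂ H) (hXt : X ≤ t.domain)
    (hXcore : ∀ y ∈ t.domain, ∀ ε > (0 : ℝ), ∃ x ∈ X,
      ‖x - y‖ + ‖pApply t x - pApply t y‖ < ε)
    -- (1) (s ± λi)⁻¹ X ⊆ Dom t
    (h1 : ∀ l : ℝ, l ≠ 0 → ∀ x ∈ X, Rs l x ∈ t.domain)
    -- (2) t (s ± λi)⁻¹ X ⊆ Dom s
    (h2 : ∀ l : ℝ, l ≠ 0 → ∀ x ∈ X, pApply t (Rs l x) ∈ s.domain)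
    -- (3) (st + ts)(s ± λi)⁻¹ is bounded on X
    (h3 : ∀ l : ℝ, l ≠ 0 → ∃ C : ℝ, ∀ x ∈ X,
      ‖pApply s (pApply t (Rs l x)) + pApply t (pApply s (Rs l x))‖ ≤ C * ‖x‖) :
    ∀ l : ℝ, l ≠ 0 →
      -- (a) (s + λi)⁻¹ maps Dom t into Dom t
      (∀ x ∈ t.domain, Rs l x ∈ t.domain) ∧
      -- (b) s maps (s + λi)⁻¹(Dom t) into Dom t, t maps (s + λi)⁻¹(Dom t) into Dom s
      (∀ x ∈ t.domain, pApply s (Rs l x) ∈ t.domain ∧ pApply t (Rs l x) ∈ s.domain) ∧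
      -- (c) boundedness of (st + ts)(s + λi)⁻¹ on all of Dom t …
      (∃ C : ℝ, ∀ x ∈ t.domain,
        ‖pApply s (pApply t (Rs l x)) + pApply t (pApply s (Rs l x))‖ ≤ C * ‖x‖) ∧
      -- … and the commutator identity on Dom t
      (∀ x ∈ t.domain,
        pApply t (Rs l x) + Rs (-l) (pApply t x) =
          Rs (-l) (pApply s (pApply t (Rs l x)) + pApply t (pApply s (Rs l x)))) :=
  statement18_general s t ht Rs hRs X hXt hXcore h1 h2 h3
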